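/- arXiv:1908.07019 — 4 statements merged into one kernel-verified Lean document; each statement's English description precedes it below -/
import Mathlib

section
/- Fix f' ∈ {f, 2f} and suppose m = p^{f'} − 1. Let (r,a,c) and (s,b,d) be two rank one data, and suppose there is a subset T ⊆ Z/fZ (the set of 'transitions') such that: for each i ∉ T one has p·c_{i−1} = c_i and p·d_{i−1} = d_i in Z/mZ, r_i = e' and s_i = 0; while for each i ∈ T one has c_i ≠ d_i, p·c_{i−1} = d_i and p·d_{i−1} = c_i in Z/mZ, r_i = e' − [c_i − d_i] and s_i = [c_i − d_i], where [x] ∈ {0,…,m−1} denotes the least non-negative residue of x ∈ Z/mZ. (This says the pair (M(r,a,c), M(s,b,d)) has maximal refined shape.) Then dim_F H = #{ i ∈ T : [d_{i−1} − c_{i−1}] < p^{f'−1} }. (This is the paper's computation of dim_F Hom(M, N[1/u]/N) for a pair of maximal refined shape; the condition [d_{i−1} − c_{i−1}] < p^{f'−1} is equivalent to the vanishing of the paper's invariant γ*_i.) -/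
/-!
Represent each `μ_i` by a Laurent series `x_i`. In negative degrees the defining relation of `H`
reads `a_i x_i[k - r_i] = b_i x_{i-1}[(k - s_i)/p]`, so a nonzero coefficient of `x_{i-1}` in a
degree `n < 0` forces, via `k = p n + s_i`, a nonzero coefficient of `x_i` in a degree `< n`.
The congruence `n ≡ c_{i-1} - d_{i-1}` and the maximal shape make this descent fail only when `i`
is a transition, `n = -[d_{i-1} - c_{i-1}]` and `s_i = p [d_{i-1} - c_{i-1}] < m`, i.e.
`[d_{i-1} - c_{i-1}] < p^{f'-1}`. As orders are bounded below, these coefficients determine `μ`;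
conversely each of them is attained by the single monomial `u^{-[d_{i-1} - c_{i-1}]}` in
coordinate `i - 1`, which lies in `H`.
-/

open PowerSeries

noncomputable section

/-- The image of `F⟦u⟧` in `F((u))`, as an `F`-subspace. -/
def PSsub (F : Type) [Field F] : Submodule F (LaurentSeries F) :=
  Submodule.span F (Set.range ⇑(algebraMap (PowerSeries F) (LaurentSeries F)))

/-- The set `H` computing `Hom(𝔐(r,a,c), 𝔐(s,b,d)[1/u]/𝔐(s,b,d))`: tuples `(μ_i)` in
`F((u))/F⟦u⟧` such that every nonzero term of `μ_i` occurs in a degree `n ≡ c_i − d_i (mod m)`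
and `a_i·u^{r_i}·μ_i = b_i·u^{s_i}·φ(μ_{i−1})` in `F((u))/F⟦u⟧` for all `i`. -/
def Hset (F : Type) [Field F] (f m : ℕ) (r s : ZMod f → ℕ) (a b : ZMod f → Fˣ)
    (c d : ZMod f → ZMod m) (φL : LaurentSeries F →+ LaurentSeries F) :
    Set (ZMod f → (LaurentSeries F ⧸ PSsub F)) :=
  {μ | ∃ x : ZMod f → LaurentSeries F,
    (∀ i, Submodule.Quotient.mk (x i) = μ i) ∧
    (∀ (i : ZMod f) (n : ℤ), n < 0 → (x i).coeff n ≠ 0 → (n : ZMod m) = c i - d i) ∧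
    (∀ i : ZMod f,
      (Submodule.Quotient.mk (algebraMap (PowerSeries F) (LaurentSeries F)
          (PowerSeries.C (a i : F) * PowerSeries.X ^ r i) * x i) :
        LaurentSeries F ⧸ PSsub F) =
      Submodule.Quotient.mk (algebraMap (PowerSeries F) (LaurentSeries F)
          (PowerSeries.C (b i : F) * PowerSeries.X ^ s i) * φL (x (i - 1))))}

namespace PSsub

variable {F : Type} [Field F]

theorem mem_iff {z : LaurentSeries F} : z ∈ PSsub F ↔ ∀ n < 0, z.coeff n = 0 := by
  constructor
  · intro hz
    induction hz using Submodule.span_induction with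
    | mem w hw =>
      obtain ⟨g, rfl⟩ := hw
      intro n hn
      rw [LaurentSeries.coe_algebraMap, PowerSeries.coeff_coe, if_pos hn]
    | zero => simp
    | add w₁ w₂ _ _ h₁ h₂ => intro n hn; rw [HahnSeries.coeff_add, h₁ n hn, h₂ n hn, add_zero]
    | smul k w _ h => intro n hn; rw [HahnSeries.coeff_smul, h n hn, smul_zero]
  · intro h
    have hz : z = algebraMap F⟦X⟧ (LaurentSeries F) (PowerSeries.mk fun k => z.coeff k) := by
      ext n
      rw [LaurentSeries.coe_algebraMap, PowerSeries.coeff_coe]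
      split_ifs with hn
      · exact h n hn
      · rw [PowerSeries.coeff_mk, Int.natAbs_of_nonneg (not_lt.1 hn)]
    rw [hz]
    exact Submodule.subset_span ⟨_, rfl⟩

theorem mk_eq_mk_iff {z w : LaurentSeries F} :
    (Submodule.Quotient.mk z : LaurentSeries F ⧸ PSsub F) = Submodule.Quotient.mk w ↔
      ∀ n < 0, z.coeff n = w.coeff n := by
  simp only [Submodule.Quotient.eq, mem_iff, HahnSeries.coeff_sub, sub_eq_zero]

theorem coeff_algebraMap_C_mul_X_pow_mul (w : F) (r : ℕ) (z : LaurentSeries F) (k : ℤ) :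
    (algebraMap F⟦X⟧ (LaurentSeries F) (C w * X ^ r) * z).coeff k = w * z.coeff (k - r) := by
  rw [map_mul, LaurentSeries.coe_algebraMap, HahnSeries.ofPowerSeries_C,
    HahnSeries.ofPowerSeries_X_pow, mul_assoc, HahnSeries.C_mul_eq_smul,
    HahnSeries.coeff_smul, HahnSeries.coeff_single_mul, one_mul, smul_eq_mul]

theorem mk_C_mul_X_pow_mul_eq_iff {A B : F} {r s : ℕ} {z w : LaurentSeries F} :
    (Submodule.Quotient.mk (algebraMap F⟦X⟧ (LaurentSeries F) (C A * X ^ r) * z) :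
        LaurentSeries F ⧸ PSsub F) =
      Submodule.Quotient.mk (algebraMap F⟦X⟧ (LaurentSeries F) (C B * X ^ s) * w) ↔
      ∀ k < 0, A * z.coeff (k - r) = B * w.coeff (k - s) := by
  simp only [mk_eq_mk_iff, coeff_algebraMap_C_mul_X_pow_mul]

end PSsub

variable {F : Type} [Field F]

-- Set to `0` for `n ≥ 0`, where the coefficient does not descend to the quotient.
variable (F) in
def principalCoeff (n : ℤ) : (LaurentSeries F ⧸ PSsub F) →ₗ[F] F :=
  if hn : n < 0 then
    (PSsub F).liftQ (HahnSeries.coeff.linearMap n) fun _ hz => PSsub.mem_iff.1 hz n hn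
  else 0

theorem principalCoeff_mk {n : ℤ} (hn : n < 0) (z : LaurentSeries F) :
    principalCoeff F n (Submodule.Quotient.mk z) = z.coeff n := by
  rw [principalCoeff, dif_pos hn]
  rfl

theorem coeff_eq_zero_of_descent {R ι : Type*} [Zero R] [Finite ι] (x : ι → HahnSeries ℤ R)
    (h : ∀ i, ∀ n < 0, (x i).coeff n ≠ 0 → ∃ j, ∃ n' < n, (x j).coeff n' ≠ 0) :
    ∀ i, ∀ n < 0, (x i).coeff n = 0 := by
  by_contra! hex
  obtain ⟨b, hb⟩ := (Set.finite_range fun i => (x i).order).bddBelow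
  obtain ⟨n, ⟨hn, i, hi⟩, hmin⟩ := Int.exists_least_of_bdd
    (P := fun n => n < 0 ∧ ∃ i, (x i).coeff n ≠ 0)
    ⟨b, fun n ⟨_, i, hi⟩ => (hb ⟨i, rfl⟩).trans (HahnSeries.order_le_of_coeff_ne_zero hi)⟩
    (by obtain ⟨i, n, hn, hi⟩ := hex; exact ⟨n, hn, i, hi⟩)
  obtain ⟨j, n', hn', hj⟩ := h i n hn hi
  exact (hmin n' ⟨hn'.trans hn, j, hj⟩).not_gt hn'

section Frobenius

variable {p : ℕ} {φ : LaurentSeries F →+ LaurentSeries F}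

theorem map_smul_of_coeff
    (hφ₁ : ∀ (x : LaurentSeries F) (k : ℤ), (φ x).coeff (p * k) = x.coeff k)
    (hφ₂ : ∀ (x : LaurentSeries F) (n : ℤ), ¬(p : ℤ) ∣ n → (φ x).coeff n = 0)
    (k : F) (x : LaurentSeries F) : φ (k • x) = k • φ x := by
  ext n
  by_cases hn : (p : ℤ) ∣ n
  · obtain ⟨t, rfl⟩ := hn
    rw [hφ₁, HahnSeries.coeff_smul, HahnSeries.coeff_smul, hφ₁]
  · rw [hφ₂ _ _ hn, HahnSeries.coeff_smul, hφ₂ _ _ hn, smul_zero]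

theorem coeff_map_single_of_ne
    (hφ₁ : ∀ (x : LaurentSeries F) (k : ℤ), (φ x).coeff (p * k) = x.coeff k)
    (hφ₂ : ∀ (x : LaurentSeries F) (n : ℤ), ¬(p : ℤ) ∣ n → (φ x).coeff n = 0)
    {n k : ℤ} (h : k ≠ p * n) (w : F) :
    (φ (HahnSeries.single n w)).coeff k = 0 := by
  by_cases hk : (p : ℤ) ∣ k
  · obtain ⟨t, rfl⟩ := hk
    rw [hφ₁, HahnSeries.coeff_single_of_ne]
    rintro rfl
    exact h rfl
  · exact hφ₂ _ _ hk

end Frobenius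

section Hset

variable {f m : ℕ} {r s : ZMod f → ℕ} {a b : ZMod f → Fˣ} {c d : ZMod f → ZMod m}
  {φ : LaurentSeries F →+ LaurentSeries F}

theorem mem_Hset_iff {μ : ZMod f → LaurentSeries F ⧸ PSsub F} :
    μ ∈ Hset F f m r s a b c d φ ↔ ∃ x : ZMod f → LaurentSeries F,
      (∀ i, Submodule.Quotient.mk (x i) = μ i) ∧
      (∀ (i : ZMod f) (n : ℤ), n < 0 → (x i).coeff n ≠ 0 → (n : ZMod m) = c i - d i) ∧
      ∀ i, ∀ k < 0,
        (a i : F) * (x i).coeff (k - r i) = b i * (φ (x (i - 1))).coeff (k - s i) := by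
  simp only [Hset, Set.mem_ofPred_eq, PSsub.mk_C_mul_X_pow_mul_eq_iff]

variable (F f m r s a b c d φ) in
def Hsubmodule (hφ : ∀ (k : F) x, φ (k • x) = k • φ x) :
    Submodule F (ZMod f → LaurentSeries F ⧸ PSsub F) where
  carrier := Hset F f m r s a b c d φ
  zero_mem' := mem_Hset_iff.2 ⟨0, fun _ => rfl, fun _ _ _ h => absurd rfl h, by simp⟩
  add_mem' := by
    rintro μ ν hμ hν
    obtain ⟨x, hxμ, hxc, hxeq⟩ := mem_Hset_iff.1 hμ
    obtain ⟨y, hyν, hyc, hyeq⟩ := mem_Hset_iff.1 hν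
    refine mem_Hset_iff.2 ⟨x + y, fun i => by simp [hxμ, hyν], fun i n hn h => ?_,
      fun i k hk => ?_⟩
    · by_cases hx : (x i).coeff n = 0
      · exact hyc i n hn (by simpa [hx] using h)
      · exact hxc i n hn hx
    · simp only [Pi.add_apply, map_add, HahnSeries.coeff_add, mul_add, hxeq i k hk, hyeq i k hk]
  smul_mem' := by
    rintro t μ hμ
    obtain ⟨x, hxμ, hxc, hxeq⟩ := mem_Hset_iff.1 hμ
    refine mem_Hset_iff.2 ⟨t • x, fun i => by simp [hxμ], fun i n hn h => ?_, fun i k hk => ?_⟩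
    · exact hxc i n hn fun hx => h (by simp [hx])
    · simp only [Pi.smul_apply, hφ, HahnSeries.coeff_smul, smul_eq_mul, mul_left_comm _ t,
        hxeq i k hk]

theorem span_Hset_eq (hφ : ∀ (k : F) x, φ (k • x) = k • φ x) :
    Submodule.span F (Hset F f m r s a b c d φ) = Hsubmodule F f m r s a b c d φ hφ :=
  Submodule.span_eq (Hsubmodule F f m r s a b c d φ hφ)

theorem coeff_relation_single {p x : ℕ}
    (hφ₁ : ∀ (x : LaurentSeries F) (k : ℤ), (φ x).coeff (p * k) = x.coeff k)
    (hφ₂ : ∀ (x : LaurentSeries F) (n : ℤ), ¬(p : ℤ) ∣ n → (φ x).coeff n = 0)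
    {i : ZMod f} (hs : s i = p * x) (hr : x ≤ r (i - 1)) {X : ZMod f → LaurentSeries F}
    (hX : X = Pi.single (i - 1) (HahnSeries.single (-(x : ℤ)) 1)) (j : ZMod f) {k : ℤ}
    (hk : k < 0) :
    (a j : F) * (X j).coeff (k - r j) = b j * (φ (X (j - 1))).coeff (k - s j) := by
  have hlhs : (X j).coeff (k - r j) = 0 := by
    rw [hX]
    by_cases hj : j = i - 1
    · subst hj
      rw [Pi.single_eq_same, HahnSeries.coeff_single_of_ne]
      omega
    · rw [Pi.single_eq_of_ne hj, HahnSeries.coeff_zero]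
  have hrhs : (φ (X (j - 1))).coeff (k - s j) = 0 := by
    rw [hX]
    by_cases hj : j = i
    · subst hj
      rw [Pi.single_eq_same, coeff_map_single_of_ne hφ₁ hφ₂]
      rw [hs]
      push_cast
      intro heq
      linarith
    · rw [Pi.single_eq_of_ne (fun h => hj (sub_left_injective h)), map_zero,
        HahnSeries.coeff_zero]
  rw [hlhs, hrhs, mul_zero, mul_zero]

end Hset

-- At a transition `i`: `x = [d_{i-1} - c_{i-1}]`, `s = s_i`, `e' - s = r_i`, and `n` is the
-- degree of a nonzero coefficient of `x_{i-1}`.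
theorem transition_descent {p m e' x s n : ℤ} (hp : 2 ≤ p) (hme : m ≤ e') (hx : 0 ≤ x)
    (hxm : x < m) (hsm : s < m) (hsx : m ∣ p * x - s) (hn : n < 0)
    (hnx : m ∣ n + x) :
    (n = -x ∧ s = p * x) ∨ (p * n + s < 0 ∧ p * n + s - (e' - s) < n) := by
  obtain ⟨q, hq⟩ := hnx
  obtain ⟨J, hJ⟩ := hsx
  have hq0 : q ≤ 0 := by nlinarith
  have hJ0 : 0 ≤ J := by nlinarith
  by_cases h : q = 0 ∧ J = 0
  · obtain ⟨rfl, rfl⟩ := h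
    left; constructor <;> linarith
  · right
    have hpqJ : p * q - J ≤ -1 := by
      rcases lt_or_eq_of_le hq0 with hq | rfl
      · nlinarith
      · omega
    constructor <;> nlinarith

theorem Nat.lt_pow_pred_iff_mul_lt {p n x : ℕ} (hp : 2 ≤ p) (hn : n ≠ 0) :
    x < p ^ (n - 1) ↔ p * x < p ^ n - 1 := by
  obtain ⟨k, rfl⟩ := Nat.exists_eq_succ_of_ne_zero hn
  rw [Nat.succ_sub_one, pow_succ']
  constructor
  · intro h
    have : p * (x + 1) ≤ p * p ^ k := Nat.mul_le_mul_left p h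
    rw [mul_add, mul_one] at this
    omega
  · intro h
    exact Nat.lt_of_mul_lt_mul_left (a := p) (by omega)

section MaximalShape

variable {f m : ℕ}

structure IsMaximalRefinedShape (p e' : ℕ) (r s : ZMod f → ℕ) (c d : ZMod f → ZMod m)
    (T : Finset (ZMod f)) : Prop where
  of_not_mem : ∀ i, i ∉ T →
    (p : ZMod m) * c (i - 1) = c i ∧ (p : ZMod m) * d (i - 1) = d i ∧ r i = e' ∧ s i = 0
  of_mem : ∀ i ∈ T,
    c i ≠ d i ∧ (p : ZMod m) * c (i - 1) = d i ∧ (p : ZMod m) * d (i - 1) = c i ∧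
      r i = e' - (c i - d i).val ∧ s i = (c i - d i).val

-- For `m = p^{f'} - 1` the condition reads `[d_{i-1} - c_{i-1}] < p^{f'-1}`, i.e. `γ*_i = 0`.
def lowTransitions (p : ℕ) (c d : ZMod f → ZMod m) (T : Finset (ZMod f)) : Finset (ZMod f) :=
  T.filter fun i => p * (d (i - 1) - c (i - 1)).val < m

variable {p e' : ℕ} {r s : ZMod f → ℕ} {c d : ZMod f → ZMod m} {T : Finset (ZMod f)}

namespace IsMaximalRefinedShape

theorem sub_eq (h : IsMaximalRefinedShape p e' r s c d T) {i : ZMod f} (hi : i ∈ T) :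
    c i - d i = p * (d (i - 1) - c (i - 1)) := by
  obtain ⟨-, hc, hd, -⟩ := h.of_mem i hi
  rw [← hc, ← hd, mul_sub]

theorem lowTransition_or_descent [NeZero m] (h : IsMaximalRefinedShape p e' r s c d T)
    (hp : 2 ≤ p) (hme : m ≤ e') (i : ZMod f) {n : ℤ} (hn : n < 0)
    (hnc : (n : ZMod m) = c (i - 1) - d (i - 1)) :
    (i ∈ lowTransitions p c d T ∧ n = -((d (i - 1) - c (i - 1)).val : ℤ)) ∨
      ((p : ℤ) * n + s i < 0 ∧ (p : ℤ) * n + s i - r i < n) := by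
  by_cases hi : i ∈ T
  · obtain ⟨-, -, -, hr, hs⟩ := h.of_mem i hi
    set x := (d (i - 1) - c (i - 1)).val with hx
    have hsm : s i < m := hs ▸ ZMod.val_lt _
    have hr' : (r i : ℤ) = e' - s i := by rw [hr, ← hs]; omega
    have hsx : (m : ℤ) ∣ p * x - s i := by
      rw [← ZMod.intCast_zmod_eq_zero_iff_dvd]
      push_cast
      rw [hs, hx, ZMod.natCast_zmod_val, ZMod.natCast_zmod_val, h.sub_eq hi, sub_self]
    have hnx : (m : ℤ) ∣ n + x := by
      rw [← ZMod.intCast_zmod_eq_zero_iff_dvd]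
      push_cast
      rw [hnc, hx, ZMod.natCast_zmod_val]
      ring
    rcases transition_descent (e' := e') (by exact_mod_cast hp) (by exact_mod_cast hme)
      (Int.natCast_nonneg x) (by exact_mod_cast ZMod.val_lt _) (by exact_mod_cast hsm) hsx hn
      hnx with ⟨hn_eq, hs_eq⟩ | hdesc
    · refine Or.inl ⟨Finset.mem_filter.2 ⟨hi, ?_⟩, hn_eq⟩
      have : ((p * x : ℕ) : ℤ) < m := by push_cast; omega
      exact_mod_cast this
    · exact Or.inr (hr' ▸ hdesc)
  · obtain ⟨-, -, hr, hs⟩ := h.of_not_mem i hi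
    right
    rw [hr, hs]
    have : (2 : ℤ) ≤ p := by exact_mod_cast hp
    constructor <;> push_cast <;> nlinarith

theorem spec_of_mem_lowTransitions [NeZero m] (h : IsMaximalRefinedShape p e' r s c d T)
    (hme : m ≤ e') {i : ZMod f} (hi : i ∈ lowTransitions p c d T) :
    0 < (d (i - 1) - c (i - 1)).val ∧ s i = p * (d (i - 1) - c (i - 1)).val ∧
      (d (i - 1) - c (i - 1)).val ≤ r (i - 1) := by
  obtain ⟨hiT, hlow⟩ := Finset.mem_filter.1 hi
  obtain ⟨hcd, -, -, -, hs⟩ := h.of_mem i hiT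
  have hne : d (i - 1) - c (i - 1) ≠ 0 := by
    intro h0
    exact hcd (sub_eq_zero.1 (by rw [h.sub_eq hiT, h0, mul_zero]))
  refine ⟨Nat.pos_of_ne_zero ((ZMod.val_ne_zero _).2 hne), ?_, ?_⟩
  · conv_lhs => rw [hs, h.sub_eq hiT, ← ZMod.natCast_zmod_val (d (i - 1) - c (i - 1)),
      ← Nat.cast_mul, ZMod.val_natCast_of_lt hlow]
  · by_cases hi' : i - 1 ∈ T
    · obtain ⟨-, -, -, hr, -⟩ := h.of_mem _ hi'
      have hneg : (c (i - 1) - d (i - 1)).val = m - (d (i - 1) - c (i - 1)).val := by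
        rw [← neg_sub, ZMod.neg_val, if_neg hne]
      have := ZMod.val_lt (d (i - 1) - c (i - 1))
      omega
    · obtain ⟨-, -, hr, -⟩ := h.of_not_mem _ hi'
      have := ZMod.val_lt (d (i - 1) - c (i - 1))
      omega

end IsMaximalRefinedShape

end MaximalShape

section Residues

variable {f m : ℕ} {c d : ZMod f → ZMod m}

variable (F c d) in
def residues (S : Finset (ZMod f)) :
    (ZMod f → LaurentSeries F ⧸ PSsub F) →ₗ[F] (S → F) :=
  LinearMap.pi fun σ => (principalCoeff F (-((d (σ.1 - 1) - c (σ.1 - 1)).val : ℤ))).comp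
    (LinearMap.proj (σ.1 - 1))

theorem residues_apply {S : Finset (ZMod f)} (μ : ZMod f → LaurentSeries F ⧸ PSsub F) (σ : S) :
    residues F c d S μ σ =
      principalCoeff F (-((d (σ.1 - 1) - c (σ.1 - 1)).val : ℤ)) (μ (σ.1 - 1)) :=
  rfl

theorem residues_single {S : Finset (ZMod f)} {i : ZMod f} (hi : i ∈ S)
    (hpos : 0 < (d (i - 1) - c (i - 1)).val) :
    residues F c d S (Pi.single (i - 1)
        (Submodule.Quotient.mk (HahnSeries.single (-((d (i - 1) - c (i - 1)).val : ℤ)) 1))) =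
      Pi.single ⟨i, hi⟩ 1 := by
  have hneg : -((d (i - 1) - c (i - 1)).val : ℤ) < 0 := by omega
  funext τ
  rw [residues_apply]
  by_cases hτ : τ = ⟨i, hi⟩
  · subst hτ
    rw [Pi.single_eq_same, Pi.single_eq_same, principalCoeff_mk hneg,
      HahnSeries.coeff_single_same]
  · have hτ' : τ.1 - 1 ≠ i - 1 := fun h => hτ (Subtype.ext (sub_left_injective h))
    rw [Pi.single_eq_of_ne hτ', map_zero, Pi.single_eq_of_ne hτ]

end Residues

namespace IsMaximalRefinedShape

variable {f m p e' : ℕ} {r s : ZMod f → ℕ} {a b : ZMod f → Fˣ} {c d : ZMod f → ZMod m}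
  {T : Finset (ZMod f)} {φ : LaurentSeries F →+ LaurentSeries F}

theorem eq_zero_of_residues_eq_zero [NeZero f] [NeZero m]
    (h : IsMaximalRefinedShape p e' r s c d T) (hp : 2 ≤ p) (hme : m ≤ e')
    (hφ₁ : ∀ (x : LaurentSeries F) (k : ℤ), (φ x).coeff (p * k) = x.coeff k)
    {μ : ZMod f → LaurentSeries F ⧸ PSsub F} (hμ : μ ∈ Hset F f m r s a b c d φ)
    (h0 : residues F c d (lowTransitions p c d T) μ = 0) : μ = 0 := by
  obtain ⟨x, hxμ, hxc, hxeq⟩ := mem_Hset_iff.1 hμ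
  have hx : ∀ i, ∀ n < 0, (x i).coeff n = 0 := by
    refine coeff_eq_zero_of_descent x fun j n hn hne => ?_
    obtain ⟨i, rfl⟩ : ∃ i, j = i - 1 := ⟨j + 1, (add_sub_cancel_right j 1).symm⟩
    rcases h.lowTransition_or_descent hp hme i hn (hxc _ n hn hne) with ⟨hlow, rfl⟩ | ⟨hk, hlt⟩
    · have := congr_fun h0 ⟨i, hlow⟩
      rw [residues_apply, ← hxμ, principalCoeff_mk hn] at this
      exact absurd this hne
    · refine ⟨i, _, hlt, fun hzero => hne ?_⟩
      have := hxeq i _ hk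
      rw [hzero, mul_zero, add_sub_cancel_right, hφ₁] at this
      exact (mul_eq_zero.1 this.symm).resolve_left (Units.ne_zero _)
  funext i
  rw [← hxμ i, Pi.zero_apply, Submodule.Quotient.mk_eq_zero, PSsub.mem_iff]
  exact hx i

theorem single_mem_Hset [NeZero m] (h : IsMaximalRefinedShape p e' r s c d T) (hme : m ≤ e')
    (hφ₁ : ∀ (x : LaurentSeries F) (k : ℤ), (φ x).coeff (p * k) = x.coeff k)
    (hφ₂ : ∀ (x : LaurentSeries F) (n : ℤ), ¬(p : ℤ) ∣ n → (φ x).coeff n = 0)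
    {i : ZMod f} (hi : i ∈ lowTransitions p c d T) :
    Pi.single (i - 1)
        (Submodule.Quotient.mk (HahnSeries.single (-((d (i - 1) - c (i - 1)).val : ℤ)) 1)) ∈
      Hset F f m r s a b c d φ := by
  obtain ⟨-, hs, hr⟩ := h.spec_of_mem_lowTransitions hme hi
  refine mem_Hset_iff.2 ⟨_, Pi.apply_single (fun _ => Submodule.Quotient.mk)
    (fun _ => Submodule.Quotient.mk_zero _) _ _, fun j n _ hne => ?_,
    fun j k hk => coeff_relation_single hφ₁ hφ₂ hs hr rfl j hk⟩
  rw [Pi.single_apply] at hne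
  split_ifs at hne with hj
  · subst hj
    obtain rfl : n = -((d (i - 1) - c (i - 1)).val : ℤ) :=
      by_contra fun hn => hne (HahnSeries.coeff_single_of_ne hn)
    push_cast
    rw [ZMod.natCast_zmod_val]
    ring
  · exact absurd HahnSeries.coeff_zero hne

theorem bijective_residues [NeZero f] [NeZero m] (h : IsMaximalRefinedShape p e' r s c d T)
    (hp : 2 ≤ p) (hme : m ≤ e')
    (hφ₁ : ∀ (x : LaurentSeries F) (k : ℤ), (φ x).coeff (p * k) = x.coeff k)
    (hφ₂ : ∀ (x : LaurentSeries F) (n : ℤ), ¬(p : ℤ) ∣ n → (φ x).coeff n = 0) :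
    Function.Bijective ((residues F c d (lowTransitions p c d T)).domRestrict
      (Hsubmodule F f m r s a b c d φ (map_smul_of_coeff hφ₁ hφ₂))) := by
  refine ⟨(injective_iff_map_eq_zero _).2 fun μ hμ =>
    Subtype.ext (h.eq_zero_of_residues_eq_zero hp hme hφ₁ μ.2 hμ), ?_⟩
  rw [← LinearMap.range_eq_top, eq_top_iff, ← (Pi.basisFun F _).span_eq, Submodule.span_le]
  rintro _ ⟨⟨i, hi⟩, rfl⟩
  exact ⟨⟨_, h.single_mem_Hset hme hφ₁ hφ₂ hi⟩,
    (residues_single hi (h.spec_of_mem_lowTransitions hme hi).1).trans (Pi.basisFun_apply ..).symm⟩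

end IsMaximalRefinedShape

theorem statement_15_general
    (p : ℕ) (hp : p.Prime) (F : Type) [Field F]
    (f e m : ℕ) [NeZero f] (he : 1 ≤ e) (hm1 : 1 ≤ m)
    (f' : ℕ) (hm : m = p ^ f' - 1)
    (e' : ℕ) (he' : e' = e * m)
    (r : ZMod f → ℕ) (a : ZMod f → Fˣ) (c : ZMod f → ZMod m)
    (s : ZMod f → ℕ) (b : ZMod f → Fˣ) (d : ZMod f → ZMod m)
    (T : Finset (ZMod f))
    (hT : ∀ i : ZMod f, i ∉ T →
      (p : ZMod m) * c (i - 1) = c i ∧ (p : ZMod m) * d (i - 1) = d i ∧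
        r i = e' ∧ s i = 0)
    (hT' : ∀ i ∈ T,
      c i ≠ d i ∧ (p : ZMod m) * c (i - 1) = d i ∧ (p : ZMod m) * d (i - 1) = c i ∧
        r i = e' - (c i - d i).val ∧ s i = (c i - d i).val)
    (φL : LaurentSeries F →+ LaurentSeries F)
    (hφ1 : ∀ (x : LaurentSeries F) (k : ℤ), (φL x).coeff (p * k) = x.coeff k)
    (hφ2 : ∀ (x : LaurentSeries F) (n : ℤ), ¬(p : ℤ) ∣ n → (φL x).coeff n = 0) :
    Module.rank F ↥(Submodule.span F (Hset F f m r s a b c d φL)) =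
      ((T.filter fun i => (d (i - 1) - c (i - 1)).val < p ^ (f' - 1)).card : Cardinal) := by
  have : NeZero m := ⟨by omega⟩
  have hme : m ≤ e' := he' ▸ Nat.le_mul_of_pos_left m he
  have hf' : f' ≠ 0 := by
    rintro rfl
    rw [pow_zero] at hm
    omega
  have hlow : T.filter (fun i => (d (i - 1) - c (i - 1)).val < p ^ (f' - 1)) =
      lowTransitions p c d T :=
    Finset.filter_congr fun i _ => by rw [Nat.lt_pow_pred_iff_mul_lt hp.two_le hf', ← hm]
  have hbij := IsMaximalRefinedShape.bijective_residues (a := a) (b := b) ⟨hT, hT'⟩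
    hp.two_le hme hφ1 hφ2
  rw [span_Hset_eq (map_smul_of_coeff hφ1 hφ2), hlow,
    (LinearEquiv.ofBijective _ hbij).rank_eq, rank_fun', Fintype.card_coe]

/-- Suppose `m = p^{f'} − 1` with `f' ∈ {f, 2f}` and the pair
`((r,a,c), (s,b,d))` has maximal refined shape, with set of transitions `T`.  Then
`dim_F H = #{i ∈ T : [d_{i−1} − c_{i−1}] < p^{f'−1}}` (here `[x]` denotes the least
non-negative residue `ZMod.val x`, and the displayed condition is equivalent to the
vanishing of the invariant `γ*_i`). -/
theorem statement_15
    (p : ℕ) (hp : p.Prime) (F : Type) [Field F] [Fintype F] [CharP F p]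
    (f e m : ℕ) [NeZero f] (he : 1 ≤ e) (hm1 : 1 ≤ m)
    (f' : ℕ) (hf' : f' = f ∨ f' = 2 * f) (hm : m = p ^ f' - 1)
    (e' : ℕ) (he' : e' = e * m)
    (r : ZMod f → ℕ) (a : ZMod f → Fˣ) (c : ZMod f → ZMod m)
    (hr : ∀ i, r i ≤ e') (hc : ∀ i, (p : ZMod m) * c (i - 1) = c i + (r i : ZMod m))
    (s : ZMod f → ℕ) (b : ZMod f → Fˣ) (d : ZMod f → ZMod m)
    (hs : ∀ i, s i ≤ e') (hd : ∀ i, (p : ZMod m) * d (i - 1) = d i + (s i : ZMod m))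
    (T : Finset (ZMod f))
    (hT : ∀ i : ZMod f, i ∉ T →
      (p : ZMod m) * c (i - 1) = c i ∧ (p : ZMod m) * d (i - 1) = d i ∧
        r i = e' ∧ s i = 0)
    (hT' : ∀ i ∈ T,
      c i ≠ d i ∧ (p : ZMod m) * c (i - 1) = d i ∧ (p : ZMod m) * d (i - 1) = c i ∧
        r i = e' - (c i - d i).val ∧ s i = (c i - d i).val)
    (φL : LaurentSeries F →+ LaurentSeries F)
    (hφ1 : ∀ (x : LaurentSeries F) (k : ℤ), (φL x).coeff (p * k) = x.coeff k)
    (hφ2 : ∀ (x : LaurentSeries F) (n : ℤ), ¬(p : ℤ) ∣ n → (φL x).coeff n = 0) :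
    Module.rank F ↥(Submodule.span F (Hset F f m r s a b c d φL)) =
      ((T.filter fun i => (d (i - 1) - c (i - 1)).val < p ^ (f' - 1)).card : Cardinal) :=
  statement_15_general p hp F f e m he hm1 f' hm e' he' r a c s b d T hT hT' φL hφ1 hφ2
end
end

section
/- Let p be a prime, f' ≥ 1 an integer, and γ : Z/f'Z → {0,1,…,p−1} a function that is neither identically 0 nor identically p−1. Let P_γ be the set of subsets J ⊆ Z/f'Z such that for every i ∈ Z/f'Z: if i−1 ∈ J and i ∉ J then γ_i ≠ p−1, and if i−1 ∉ J and i ∈ J then γ_i ≠ 0. For J ∈ P_γ define t^J : Z/f'Z → Z by t^J_i := γ_i + 1 if i−1 ∈ J and i ∉ J; t^J_i := γ_i if i−1 ∈ J and i ∈ J; and t^J_i := 0 if i−1 ∉ J. Then: (a) 0 ≤ t^J_i ≤ p−1 for all i, and t^J is not identically equal to p−1; (b) the assignment J ↦ t^J is injective on P_γ. -/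
noncomputable section

/-- Let `p` be a prime, `f' ≥ 1`, and `γ : ℤ/f' → {0,…,p−1}` neither
identically `0` nor identically `p−1`.  For `J` in the set `P_γ`, define
`t^J_i = γ_i + δ_{J^c}(i)` if `i−1 ∈ J` and `t^J_i = 0` otherwise.  Then (a)
`0 ≤ t^J_i ≤ p−1` for all `i` and `t^J` is not identically `p−1`; and (b) `J ↦ t^J` is
injective on `P_γ`. -/
theorem statement_17
    (p : ℕ) (hp : p.Prime) (f' : ℕ) (hf' : 1 ≤ f')
    (γ : ZMod f' → ℕ) (hγle : ∀ i, γ i ≤ p - 1)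
    (hγ0 : ¬∀ i, γ i = 0) (hγp : ¬∀ i, γ i = p - 1) :
    let P : Finset (ZMod f') → Prop := fun J =>
      (∀ i : ZMod f', i - 1 ∈ J → i ∉ J → γ i ≠ p - 1) ∧
      (∀ i : ZMod f', i - 1 ∉ J → i ∈ J → γ i ≠ 0)
    let t : Finset (ZMod f') → ZMod f' → ℤ := fun J i =>
      if i - 1 ∈ J then (if i ∈ J then (γ i : ℤ) else (γ i : ℤ) + 1) else 0
    (∀ J : Finset (ZMod f'), P J →
      ((∀ i, 0 ≤ t J i ∧ t J i ≤ (p : ℤ) - 1) ∧ ¬∀ i, t J i = (p : ℤ) - 1)) ∧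
    (∀ J J' : Finset (ZMod f'), P J → P J' → t J = t J' → J = J') := by
  intro P t
  have hp2 : 2 ≤ p := hp.two_le
  haveI : NeZero f' := ⟨by omega⟩
  constructor
  · intro J hJ
    constructor
    · intro i
      have hle := hγle i
      by_cases h1 : i - 1 ∈ J
      · by_cases h2 : i ∈ J
        · simp only [t, h1, h2, if_true]
          omega
        · have hne := hJ.1 i h1 h2
          simp only [t, h1, h2, if_true, if_false]
          omega
      · simp only [t, h1, if_false]
        omega
    · intro hall
      have hmem : ∀ j : ZMod f', j ∈ J := by
        intro j
        have h := hall (j + 1)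
        simp only [t, add_sub_cancel_right] at h
        by_contra hj
        simp only [hj, if_false] at h
        omega
      apply hγp
      intro i
      have h := hall i
      simp only [t, hmem (i - 1), hmem i, if_true] at h
      omega
  · have step : ∀ J J' : Finset (ZMod f'), P J' → t J = t J' →
        ∀ x : ZMod f', x ∈ J → x ∉ J' →
        (x + 1 ∈ J ∧ x + 1 ∉ J' ∧ γ (x + 1) = 0) := by
      intro J J' hJ' ht x hxJ hxJ'
      have heq := congrFun ht (x + 1)
      simp only [t, add_sub_cancel_right, hxJ, hxJ', if_true, if_false] at heq
      by_cases h : x + 1 ∈ J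
      · simp only [h, if_true] at heq
        have hγ1 : γ (x + 1) = 0 := by omega
        refine ⟨h, ?_, hγ1⟩
        intro hmem
        exact hJ'.2 (x + 1) (by simpa using hxJ') hmem hγ1
      · simp only [h, if_false] at heq
        omega
    have key : ∀ J J' : Finset (ZMod f'), P J → P J' → t J = t J' →
        ∀ x : ZMod f', x ∈ J → x ∈ J' := by
      intro J J' hJ hJ' ht x hxJ
      by_contra hxJ'
      have chain : ∀ k : ℕ, x + (k : ZMod f') + 1 ∈ J ∧ x + (k : ZMod f') + 1 ∉ J' ∧
          γ (x + (k : ZMod f') + 1) = 0 := by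
        intro k
        induction k with
        | zero => simpa using step J J' hJ' ht x hxJ hxJ'
        | succ n ih =>
          have h := step J J' hJ' ht (x + (n : ZMod f') + 1) ih.1 ih.2.1
          have hcast : x + ((n + 1 : ℕ) : ZMod f') + 1 = x + (n : ZMod f') + 1 + 1 := by
            push_cast; ring
          rw [hcast]
          exact h
      apply hγ0
      intro j
      have hk := (chain ((j - x - 1).val)).2.2
      have hx : x + (((j - x - 1).val : ℕ) : ZMod f') + 1 = j := by
        rw [ZMod.natCast_val, ZMod.cast_id]
        ring
      rwa [hx] at hk
    intro J J' hJ hJ' ht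
    ext x
    exact ⟨fun h => key J J' hJ hJ' ht x h, fun h => key J' J hJ' hJ ht.symm x h⟩
end
end

section
/- Let Λ be a commutative ring, p a prime, and f ≥ 1 an integer. Let φ : Λ((u)) → Λ((u)) be the map on formal Laurent series over Λ given by φ(Σ_n α_n u^n) = Σ_n α_n u^{p·n}. If μ_0, …, μ_{f−1} ∈ Λ((u)) satisfy μ_i = φ(μ_{i−1}) for every i ∈ Z/fZ (indices taken modulo f), then there is a single element λ ∈ Λ such that μ_i equals the constant series λ for all i. (This is the computation underlying the paper's lemma that the endomorphism ring of a free rank one Breuil–Kisin module, or of a free rank one étale φ-module, with Λ-coefficients is exactly Λ.) -/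
theorem ZMod.apply_eq_apply_zero_of_forall_apply_sub_one {n : ℕ} {α : Type*} {g : ZMod n → α}
    (hg : ∀ i, g i = g (i - 1)) (i : ZMod n) : g i = g 0 := by
  obtain ⟨k, rfl⟩ := ZMod.intCast_surjective i
  induction k using Int.induction_on with
  | zero => simp
  | succ k ih => rw [hg, ← ih]; push_cast; ring_nf
  | pred k ih => rw [← ih, hg ((-k : ℤ) : ZMod n)]; push_cast; ring_nf

namespace LaurentSeries

variable {Λ : Type*} [Zero Λ] {p : ℕ} {φ : LaurentSeries Λ → LaurentSeries Λ}

/-- If every series of `S` is `φ` of another one of `S`, then a nonzero coefficient of index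
`n` can be traced back through the indices `n / p`, `n / p²`, …, which must eventually stop
being divisible by `p`; there `hφ2` makes it vanish. -/
theorem coeff_eq_zero_of_subset_image (hp : 2 ≤ p)
    (hφ1 : ∀ (x : LaurentSeries Λ) (k : ℤ), (φ x).coeff (p * k) = x.coeff k)
    (hφ2 : ∀ (x : LaurentSeries Λ) (n : ℤ), ¬(p : ℤ) ∣ n → (φ x).coeff n = 0)
    {S : Set (LaurentSeries Λ)} (hS : S ⊆ φ '' S) {x : LaurentSeries Λ} (hx : x ∈ S)
    {n : ℤ} (hn : n ≠ 0) : x.coeff n = 0 := by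
  induction h : n.natAbs using Nat.strong_induction_on generalizing n x with
  | _ N ih =>
    obtain ⟨y, hy, rfl⟩ := hS hx
    by_cases hd : (p : ℤ) ∣ n
    · obtain ⟨m, rfl⟩ := hd
      have hm : m ≠ 0 := right_ne_zero_of_mul hn
      have hlt : m.natAbs < N := by
        rw [← h, Int.natAbs_mul, Int.natAbs_natCast]
        exact (Nat.lt_mul_iff_one_lt_left (Int.natAbs_pos.mpr hm)).mpr hp
      rw [hφ1]
      exact ih _ hlt hy hm rfl
    · exact hφ2 y n hd

end LaurentSeries

theorem statement_18_general
    (Λ : Type) [CommRing Λ] (p : ℕ) (hp : p.Prime) (f : ℕ)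
    (φL : LaurentSeries Λ →+ LaurentSeries Λ)
    (hφ1 : ∀ (x : LaurentSeries Λ) (k : ℤ), (φL x).coeff (p * k) = x.coeff k)
    (hφ2 : ∀ (x : LaurentSeries Λ) (n : ℤ), ¬(p : ℤ) ∣ n → (φL x).coeff n = 0)
    (μ : ZMod f → LaurentSeries Λ) (hμ : ∀ i, μ i = φL (μ (i - 1))) :
    ∃ lam : Λ, ∀ i, μ i = HahnSeries.C lam := by
  have hcoeff_zero : ∀ i, (μ i).coeff 0 = (μ 0).coeff 0 :=
    ZMod.apply_eq_apply_zero_of_forall_apply_sub_one fun i => by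
      simpa [← hμ i] using hφ1 (μ (i - 1)) 0
  have hrange : Set.range μ ⊆ φL '' Set.range μ := by
    rintro _ ⟨i, rfl⟩
    exact ⟨μ (i - 1), Set.mem_range_self _, (hμ i).symm⟩
  refine ⟨(μ 0).coeff 0, fun i => ?_⟩
  ext n
  rcases eq_or_ne n 0 with rfl | hn
  · simp [hcoeff_zero i]
  · simp [LaurentSeries.coeff_eq_zero_of_subset_image hp.two_le hφ1 hφ2 hrange ⟨i, rfl⟩ hn, hn]

/-- Let `Λ` be a commutative ring, `p` a prime and `f ≥ 1`.  Let
`φ : Λ((u)) → Λ((u))` be the map `Σ αₙ uⁿ ↦ Σ αₙ u^{p·n}` (characterised coefficientwise).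
If `μ : ℤ/f → Λ((u))` satisfies `μ_i = φ(μ_{i−1})` for every `i`, then there is a single
`λ ∈ Λ` with `μ_i` equal to the constant series `λ` for all `i`. -/
theorem statement_18
    (Λ : Type) [CommRing Λ] (p : ℕ) (hp : p.Prime) (f : ℕ) [NeZero f]
    (φL : LaurentSeries Λ →+ LaurentSeries Λ)
    (hφ1 : ∀ (x : LaurentSeries Λ) (k : ℤ), (φL x).coeff (p * k) = x.coeff k)
    (hφ2 : ∀ (x : LaurentSeries Λ) (n : ℤ), ¬(p : ℤ) ∣ n → (φL x).coeff n = 0)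
    (μ : ZMod f → LaurentSeries Λ) (hμ : ∀ i, μ i = φL (μ (i - 1))) :
    ∃ lam : Λ, ∀ i, μ i = HahnSeries.C lam :=
  statement_18_general Λ p hp f φL hφ1 hφ2 μ hμ
end

section
/- Let Λ be a commutative ring, p a prime, f' ≥ 1 an integer, and λ, λ' ∈ Λ^× units. Let φ : Λ((u)) → Λ((u)) be the map on formal Laurent series over Λ given by φ(Σ_n α_n u^n) = Σ_n α_n u^{p·n}. Suppose μ_0, …, μ_{f'−1} are units of Λ((u)) satisfying μ_i = φ(μ_{i−1}) for 1 ≤ i ≤ f'−1 and λ·μ_0 = λ'·φ(μ_{f'−1}). Then each μ_i is a constant series given by a unit of Λ, and λ = λ'. (This is the computation underlying the paper's lemma that if the unramified twists M_{Λ,λ} and M_{Λ,λ'} of a rank one Breuil–Kisin module, or of a rank one étale φ-module, are isomorphic over Λ, then λ = λ'.) -/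
/-!
With `ψ = φ^[f']`, which substitutes `u ↦ u ^ p ^ f'`, the relations give `μ₀ = c · ψ μ₀` for the
constant `c = λ⁻¹λ'`. Comparing coefficients, a nonzero coefficient of `μ₀` in degree `n` forces
`n = p ^ f' * m` with a nonzero coefficient in degree `m`; so every degree in the support is
divisible by all powers of `p ^ f'`, hence is `0`. Thus `μ₀` is a constant, a unit since `μ₀` is,
and fixed by `φ`; then the wrap-around relation reads `λ a = λ' a` for a unit `a`.
-/

theorem HahnSeries.isUnit_C_iff {Γ R : Type*} [AddCommMonoid Γ] [PartialOrder Γ]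
    [IsOrderedCancelAddMonoid Γ] [CommSemiring R] {a : R} :
    IsUnit (C a : HahnSeries Γ R) ↔ IsUnit a := by
  refine ⟨fun h => ?_, IsUnit.map C⟩
  obtain ⟨w, hw⟩ := h.exists_right_inv
  have hw0 := congrArg (HahnSeries.coeff · 0) hw
  simp only [C_apply, coeff_single_zero_mul, coeff_one, if_true] at hw0
  exact .of_mul_eq_one _ hw0

namespace LaurentSeries

open HahnSeries

/-- `φ` is the substitution `u ↦ u ^ q`. -/
structure IsExpand {Λ : Type*} [Semiring Λ] (q : ℕ) (φ : LaurentSeries Λ → LaurentSeries Λ) :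
    Prop where
  coeff_mul : ∀ x k, (φ x).coeff (q * k) = x.coeff k
  coeff_of_not_dvd : ∀ x n, ¬(q : ℤ) ∣ n → (φ x).coeff n = 0

namespace IsExpand

variable {Λ : Type*} [Semiring Λ] {q : ℕ} {φ : LaurentSeries Λ → LaurentSeries Λ}

theorem iterate (h : IsExpand q φ) (n : ℕ) : IsExpand (q ^ n) φ^[n] := by
  induction n with
  | zero => exact ⟨by simp, fun x n hn => by simp at hn⟩
  | succ n ih =>
    refine ⟨fun x k => ?_, fun x m hm => ?_⟩
    · rw [Function.iterate_succ_apply', pow_succ', Nat.cast_mul, mul_assoc, h.coeff_mul,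
        ih.coeff_mul]
    · rw [Function.iterate_succ_apply']
      by_cases hd : (q : ℤ) ∣ m
      · obtain ⟨m, rfl⟩ := hd
        rw [h.coeff_mul]
        refine ih.coeff_of_not_dvd _ _ fun hdvd => hm ?_
        rw [pow_succ', Nat.cast_mul]
        exact mul_dvd_mul_left _ (by exact_mod_cast hdvd)
      · exact h.coeff_of_not_dvd _ _ hd

theorem map_C (h : IsExpand q φ) (hq : q ≠ 0) (c : Λ) : φ (C c) = C c := by
  ext n
  by_cases hd : (q : ℤ) ∣ n
  · obtain ⟨m, rfl⟩ := hd
    rw [h.coeff_mul]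
    simp [C_apply, coeff_single, hq]
  · rw [h.coeff_of_not_dvd _ _ hd, C_apply, coeff_single_of_ne]
    rintro rfl
    exact hd (dvd_zero _)

theorem eq_C_coeff_zero_of_eq_C_mul (h : IsExpand q φ) (hq : 2 ≤ q) {x : LaurentSeries Λ}
    {c : Λ} (hx : x = C c * φ x) : x = C (x.coeff 0) := by
  have descend : ∀ n, x.coeff n ≠ 0 → ∃ m, n = q * m ∧ x.coeff m ≠ 0 := by
    intro n hn
    have hcoeff : x.coeff n = c * (φ x).coeff n := by
      conv_lhs => rw [hx]
      exact coeff_single_zero_mul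
    by_cases hd : (q : ℤ) ∣ n
    · obtain ⟨m, rfl⟩ := hd
      refine ⟨m, rfl, fun hm => hn ?_⟩
      rw [hcoeff, h.coeff_mul, hm, mul_zero]
    · exact absurd (by rw [hcoeff, h.coeff_of_not_dvd x n hd, mul_zero]) hn
  have pow_dvd : ∀ k : ℕ, ∀ n, x.coeff n ≠ 0 → (q : ℤ) ^ k ∣ n := by
    intro k
    induction k with
    | zero => exact fun n _ => one_dvd n
    | succ k ih =>
      intro n hn
      obtain ⟨m, rfl, hm⟩ := descend n hn
      rw [pow_succ']
      exact mul_dvd_mul_left _ (ih m hm)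
  ext n
  rw [C_apply, coeff_single]
  split_ifs with h0
  · rw [h0]
  · by_contra hn
    have hinf : ¬FiniteMultiplicity (q : ℤ) n := fun ⟨k, hk⟩ => hk (pow_dvd (k + 1) n hn)
    exact hinf (Int.finiteMultiplicity_iff.mpr ⟨by omega, h0⟩)

end IsExpand

end LaurentSeries

open LaurentSeries

/-- Let `Λ` be a commutative ring, `p` a prime, `f' ≥ 1`, and
`λ, λ' ∈ Λˣ`.  Let `φ : Λ((u)) → Λ((u))` be the map `Σ αₙ uⁿ ↦ Σ αₙ u^{p·n}`.  If
`μ_0, …, μ_{f'−1}` are units of `Λ((u))` with `μ_i = φ(μ_{i−1})` for `1 ≤ i ≤ f'−1` and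
`λ·μ_0 = λ'·φ(μ_{f'−1})`, then each `μ_i` is a constant series given by a unit of `Λ`, and
`λ = λ'`. -/
theorem statement_19
    (Λ : Type) [CommRing Λ] (p : ℕ) (hp : p.Prime) (f' : ℕ) (hf' : 1 ≤ f')
    (lam lam' : Λˣ)
    (φL : LaurentSeries Λ →+ LaurentSeries Λ)
    (hφ1 : ∀ (x : LaurentSeries Λ) (k : ℤ), (φL x).coeff (p * k) = x.coeff k)
    (hφ2 : ∀ (x : LaurentSeries Λ) (n : ℤ), ¬(p : ℤ) ∣ n → (φL x).coeff n = 0)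
    (μ : ℕ → LaurentSeries Λ)
    (hunit : ∀ i < f', IsUnit (μ i))
    (hrec : ∀ i : ℕ, 1 ≤ i → i ≤ f' - 1 → μ i = φL (μ (i - 1)))
    (hwrap : HahnSeries.C (lam : Λ) * μ 0 = HahnSeries.C (lam' : Λ) * φL (μ (f' - 1))) :
    (∀ i < f', ∃ v : Λˣ, μ i = HahnSeries.C (v : Λ)) ∧ lam = lam' := by
  have hφ : IsExpand p φL := ⟨hφ1, hφ2⟩
  have hchain : ∀ i < f', μ i = φL^[i] (μ 0) := by
    intro i
    induction i with
    | zero => simp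
    | succ i ih =>
      intro hi
      rw [hrec (i + 1) (by omega) (by omega), Nat.add_sub_cancel, ih (by omega),
        Function.iterate_succ_apply']
  have hfix : μ 0 = HahnSeries.C ((lam⁻¹ * lam' : Λˣ) : Λ) * φL^[f'] (μ 0) := by
    rw [← Nat.sub_add_cancel hf', Function.iterate_succ_apply', ← hchain _ (by omega),
      Units.val_mul, map_mul, mul_assoc, ← hwrap, ← mul_assoc, ← map_mul, Units.inv_mul,
      map_one, one_mul]
  have hconst := (hφ.iterate f').eq_C_coeff_zero_of_eq_C_mul
    (hp.two_le.trans (Nat.le_self_pow (by omega) p)) hfix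
  obtain ⟨v, hv⟩ := HahnSeries.isUnit_C_iff.mp (hconst ▸ hunit 0 (by omega))
  have hμ : ∀ i < f', μ i = HahnSeries.C (v : Λ) := fun i hi => by
    rw [hchain i hi, hconst, ← hv, Function.iterate_fixed (hφ.map_C hp.ne_zero _)]
  refine ⟨fun i hi => ⟨v, hμ i hi⟩, Units.ext (v.isUnit.mul_right_cancel ?_)⟩
  rw [hμ 0 (by omega), hμ _ (by omega), hφ.map_C hp.ne_zero, ← map_mul, ← map_mul] at hwrap
  exact HahnSeries.C_injective hwrap
end
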